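/- Let m, a, α > 0 be real constants and let λ ∈ ℂ. There exists a twice continuously differentiable function f : [0,1] → ℂ, not identically zero, satisfying f''(x) = λ² f(x) for all x ∈ (0,1), f(0) = 0, and (1 + aλ) f'(1) + λ(α + mλ) f(1) = 0, if and only if λ satisfies the characteristic equation e^{2λ}(1 + α + (a+m)λ) + (1 − α) + (a − m)λ = 0. Moreover, every twice continuously differentiable f : [0,1] → ℂ satisfying these three conditions is a scalar multiple of f_λ(x) = e^{λx} − e^{−λx}; in particular, each eigenvalue of this boundary eigenvalue problem is geometrically simple. -/

import Mathlib

/-!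
Written as a first-order linear system for `(f, f')`, the equation `f'' = λ² f` has unique
solutions for given initial data, so a solution with `f(0) = 0` is determined by `f'(0)`.
For `λ ≠ 0` it is `f'(0)/(2λ) · f_λ`, where `f_λ(x) = e^{λx} - e^{-λx}` is `eigenMode λ`;
for `λ = 0` it is `f'(0) · x`, and the boundary condition reads `f'(0) = 0`.
Substituting `f_λ` into the boundary condition yields `λ e^{-λ}` times the characteristic
function.
-/

open Set

theorem ODE_second_order_solution_unique {q : ℂ} {a b : ℝ} {f f' g g' : ℝ → ℂ}
    (hf : ∀ x ∈ Icc a b, HasDerivAt f (f' x) x) (hf' : ∀ x ∈ Icc a b, HasDerivAt f' (q * f x) x)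
    (hg : ∀ x ∈ Icc a b, HasDerivAt g (g' x) x) (hg' : ∀ x ∈ Icc a b, HasDerivAt g' (q * g x) x)
    (h₀ : f a = g a) (h₀' : f' a = g' a) :
    EqOn f g (Icc a b) ∧ EqOn f' g' (Icc a b) := by
  let L : ℂ × ℂ →L[ℂ] ℂ × ℂ :=
    (ContinuousLinearMap.snd ℂ ℂ ℂ).prod (q • ContinuousLinearMap.fst ℂ ℂ ℂ)
  have phase : ∀ u u' : ℝ → ℂ, (∀ x ∈ Icc a b, HasDerivAt u (u' x) x) →
      (∀ x ∈ Icc a b, HasDerivAt u' (q * u x) x) →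
      ∀ x ∈ Icc a b, HasDerivAt (fun y => (u y, u' y)) (L (u x, u' x)) x :=
    fun u u' hu hu' x hx => (hu x hx).prodMk (hu' x hx)
  have hF := phase f f' hf hf'
  have hG := phase g g' hg hg'
  have key : EqOn (fun x => (f x, f' x)) (fun x => (g x, g' x)) (Icc a b) :=
    ODE_solution_unique (v := fun _ => L) (fun _ => L.lipschitz)
      (fun x hx => (hF x hx).continuousAt.continuousWithinAt)
      (fun x hx => (hF x (Ico_subset_Icc_self hx)).hasDerivWithinAt)
      (fun x hx => (hG x hx).continuousAt.continuousWithinAt)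
      (fun x hx => (hG x (Ico_subset_Icc_self hx)).hasDerivWithinAt)
      (Prod.ext h₀ h₀')
  exact ⟨fun x hx => congrArg Prod.fst (key hx), fun x hx => congrArg Prod.snd (key hx)⟩

theorem hasDerivAt_deriv_of_deriv_deriv_eq {f : ℝ → ℂ} {q : ℂ} {a b : ℝ} (hf : ContDiff ℝ 2 f)
    (hab : a < b) (hode : ∀ x ∈ Ioo a b, deriv (deriv f) x = q * f x) :
    ∀ x ∈ Icc a b, HasDerivAt (deriv f) (q * f x) x := by
  have hode' : EqOn (deriv (deriv f)) (fun x => q * f x) (Icc a b) := by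
    rw [← closure_Ioo hab.ne]
    exact EqOn.closure hode ((hf.deriv' (n := 1)).continuous_deriv le_rfl)
      (continuous_const.mul hf.continuous)
  intro x hx
  have h := (hf.differentiable_deriv_two x).hasDerivAt
  rwa [hode' hx] at h

theorem hasDerivAt_cexp_mul_ofReal (l : ℂ) (x : ℝ) :
    HasDerivAt (fun y : ℝ => Complex.exp (l * y)) (l * Complex.exp (l * x)) x := by
  simpa [mul_comm] using (((hasDerivAt_id x).ofReal_comp).const_mul l).cexp

noncomputable def eigenMode (l : ℂ) (x : ℝ) : ℂ :=
  Complex.exp (l * x) - Complex.exp (-(l * x))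

noncomputable def eigenMode' (l : ℂ) (x : ℝ) : ℂ :=
  l * (Complex.exp (l * x) + Complex.exp (-(l * x)))

theorem hasDerivAt_eigenMode (l : ℂ) (x : ℝ) : HasDerivAt (eigenMode l) (eigenMode' l x) x := by
  have h := (hasDerivAt_cexp_mul_ofReal l x).sub (hasDerivAt_cexp_mul_ofReal (-l) x)
  simp only [neg_mul] at h
  exact h.congr_deriv (by simp only [eigenMode']; ring)

theorem hasDerivAt_eigenMode' (l : ℂ) (x : ℝ) :
    HasDerivAt (eigenMode' l) (l ^ 2 * eigenMode l x) x := by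
  have h := ((hasDerivAt_cexp_mul_ofReal l x).add (hasDerivAt_cexp_mul_ofReal (-l) x)).const_mul l
  simp only [neg_mul] at h
  exact h.congr_deriv (by simp only [eigenMode]; ring)

theorem deriv_eigenMode (l : ℂ) : deriv (eigenMode l) = eigenMode' l :=
  funext fun x => (hasDerivAt_eigenMode l x).deriv

theorem eigenMode_zero (l : ℂ) : eigenMode l 0 = 0 := by
  simp [eigenMode]

theorem eigenMode'_zero (l : ℂ) : eigenMode' l 0 = 2 * l := by
  simp only [eigenMode', Complex.ofReal_zero, mul_zero, Complex.exp_zero, neg_zero]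
  ring

theorem contDiff_eigenMode (l : ℂ) : ContDiff ℝ 2 (eigenMode l) := by
  have h : ContDiff ℝ 2 (fun y : ℝ => l * y) := contDiff_const.mul Complex.ofRealCLM.contDiff
  exact (h.cexp).sub h.neg.cexp

theorem exists_eigenMode_ne_zero {l : ℂ} (hl : l ≠ 0) : ∃ x ∈ Icc (0 : ℝ) 1, eigenMode l x ≠ 0 := by
  have hne : ∀ᶠ x in nhdsWithin 0 (Ioi 0), eigenMode l x ≠ eigenMode l 0 :=
    ((hasDerivAt_eigenMode l 0).eventually_ne (by simp [eigenMode'_zero, hl])).filter_mono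
      (nhdsWithin_mono _ fun x hx => ne_of_gt hx)
  obtain ⟨x, hx, hx1⟩ := (hne.and (Ioo_mem_nhdsGT one_pos)).exists
  exact ⟨x, Ioo_subset_Icc_self hx1, by rwa [eigenMode_zero] at hx⟩

theorem eqOn_smul_eigenMode {l : ℂ} (hl : l ≠ 0) {b : ℝ} (hb : 0 < b) {f : ℝ → ℂ}
    (hf : ContDiff ℝ 2 f) (hode : ∀ x ∈ Ioo 0 b, deriv (deriv f) x = l ^ 2 * f x) (h₀ : f 0 = 0) :
    EqOn f (fun x => deriv f 0 / (2 * l) * eigenMode l x) (Icc 0 b) ∧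
      EqOn (deriv f) (fun x => deriv f 0 / (2 * l) * eigenMode' l x) (Icc 0 b) := by
  set c := deriv f 0 / (2 * l)
  refine ODE_second_order_solution_unique
    (fun x _ => (hf.differentiable two_ne_zero x).hasDerivAt)
    (hasDerivAt_deriv_of_deriv_deriv_eq hf hb hode)
    (fun x _ => (hasDerivAt_eigenMode l x).const_mul c)
    (fun x _ => ?_) (by simp [h₀, eigenMode_zero]) ?_
  · exact ((hasDerivAt_eigenMode' l x).const_mul c).congr_deriv (by ring)
  · simp only [c, eigenMode'_zero]
    field_simp

theorem eqOn_zero_of_deriv_deriv_eq_zero {f : ℝ → ℂ} (hf : ContDiff ℝ 2 f)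
    (hode : ∀ x ∈ Ioo (0 : ℝ) 1, deriv (deriv f) x = 0) (h₀ : f 0 = 0) (h₁ : deriv f 1 = 0) :
    EqOn f 0 (Icc 0 1) := by
  obtain ⟨hf_eq, hf'_eq⟩ := ODE_second_order_solution_unique (q := 0)
    (g := fun x => deriv f 0 * x) (g' := fun _ => deriv f 0)
    (fun x _ => (hf.differentiable two_ne_zero x).hasDerivAt)
    (hasDerivAt_deriv_of_deriv_deriv_eq hf one_pos (by simpa using hode))
    (fun x _ => by simpa using ((hasDerivAt_id x).ofReal_comp).const_mul (deriv f 0))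
    (fun x _ => by simpa using hasDerivAt_const x (deriv f 0)) (by simp [h₀]) rfl
  have hC : deriv f 0 = 0 := by rw [← h₁, hf'_eq (right_mem_Icc.mpr zero_le_one)]
  intro x hx
  simp [hf_eq hx, hC]

theorem boundary_form_eigenMode (m a α l : ℂ) :
    (1 + a * l) * eigenMode' l 1 + l * (α + m * l) * eigenMode l 1 =
      l * Complex.exp (-l) *
        (Complex.exp (2 * l) * (1 + α + (a + m) * l) + (1 - α) + (a - m) * l) := by
  have hexp : Complex.exp (-l) * Complex.exp (2 * l) = Complex.exp l := by
    rw [← Complex.exp_add]; congr 1; ring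
  simp only [eigenMode, eigenMode', Complex.ofReal_one, mul_one]
  linear_combination (-(l * (1 + α + (a + m) * l))) * hexp

theorem stmt4_general (m a α : ℝ) (l : ℂ) :
    ((∃ f : ℝ → ℂ, ContDiff ℝ 2 f ∧
        (∃ x ∈ Icc (0:ℝ) 1, f x ≠ 0) ∧
        (∀ x ∈ Ioo (0:ℝ) 1, deriv (deriv f) x = l ^ 2 * f x) ∧
        f 0 = 0 ∧
        (1 + a * l) * deriv f 1 + l * (α + m * l) * f 1 = 0) ↔
      Complex.exp (2 * l) * (1 + α + (a + m) * l) + (1 - α) + (a - m) * l = 0) ∧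
    (∀ f : ℝ → ℂ, ContDiff ℝ 2 f →
        (∀ x ∈ Ioo (0:ℝ) 1, deriv (deriv f) x = l ^ 2 * f x) →
        f 0 = 0 →
        (1 + a * l) * deriv f 1 + l * (α + m * l) * f 1 = 0 →
        ∃ c : ℂ, ∀ x ∈ Icc (0:ℝ) 1,
          f x = c * (Complex.exp (l * x) - Complex.exp (-(l * x)))) := by
  have vanish_of_l_eq_zero : ∀ f : ℝ → ℂ, ContDiff ℝ 2 f →
      (∀ x ∈ Ioo (0:ℝ) 1, deriv (deriv f) x = l ^ 2 * f x) → f 0 = 0 →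
      (1 + a * l) * deriv f 1 + l * (α + m * l) * f 1 = 0 → l = 0 → EqOn f 0 (Icc 0 1) := by
    rintro f hf hode h₀ hbc rfl
    exact eqOn_zero_of_deriv_deriv_eq_zero hf (by simpa using hode) h₀ (by simpa using hbc)
  have h1 : (1 : ℝ) ∈ Icc (0 : ℝ) 1 := right_mem_Icc.mpr zero_le_one
  refine ⟨⟨?_, fun hchar => ?_⟩, fun f hf hode h₀ hbc => ?_⟩
  · rintro ⟨f, hf, ⟨x₀, hx₀, hfx₀⟩, hode, h₀, hbc⟩
    have hl : l ≠ 0 := fun hl => hfx₀ (vanish_of_l_eq_zero f hf hode h₀ hbc hl hx₀)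
    obtain ⟨hf_eq, hf'_eq⟩ := eqOn_smul_eigenMode hl one_pos hf hode h₀
    set c := deriv f 0 / (2 * l)
    have hc : c ≠ 0 := fun hc => hfx₀ (by simp [hf_eq hx₀, hc])
    rw [hf_eq h1, hf'_eq h1] at hbc
    have h : c * (l * Complex.exp (-l)) *
        (Complex.exp (2 * l) * (1 + α + (a + m) * l) + (1 - α) + (a - m) * l) = 0 := by
      rw [mul_assoc, ← boundary_form_eigenMode]
      linear_combination hbc
    simpa [hc, hl, Complex.exp_ne_zero] using h
  · have hl : l ≠ 0 := by
      rintro rfl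
      norm_num at hchar
    refine ⟨eigenMode l, contDiff_eigenMode l, exists_eigenMode_ne_zero hl, fun x _ => ?_,
      eigenMode_zero l, ?_⟩
    · rw [deriv_eigenMode, (hasDerivAt_eigenMode' l x).deriv]
    · rw [deriv_eigenMode, boundary_form_eigenMode, hchar, mul_zero]
  · by_cases hl : l = 0
    · exact ⟨0, fun x hx => by simpa using vanish_of_l_eq_zero f hf hode h₀ hbc hl hx⟩
    · exact ⟨_, (eqOn_smul_eigenMode hl one_pos hf hode h₀).1⟩

/-- eigenvalue problem for the operator A:
`f'' = λ²f` on `(0,1)`, `f(0) = 0`, `(1+aλ)f'(1) + λ(α+mλ)f(1) = 0`.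
A nonzero C² solution exists iff the characteristic equation
`e^{2λ}(1+α+(a+m)λ) + (1-α) + (a-m)λ = 0` holds, and every solution is a
scalar multiple of `f_λ(x) = e^{λx} - e^{-λx}`. -/
theorem stmt4 (m a α : ℝ) (hm : 0 < m) (ha : 0 < a) (hα : 0 < α) (l : ℂ) :
    ((∃ f : ℝ → ℂ, ContDiff ℝ 2 f ∧
        (∃ x ∈ Icc (0:ℝ) 1, f x ≠ 0) ∧
        (∀ x ∈ Ioo (0:ℝ) 1, deriv (deriv f) x = l ^ 2 * f x) ∧
        f 0 = 0 ∧
        (1 + a * l) * deriv f 1 + l * (α + m * l) * f 1 = 0) ↔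
      Complex.exp (2 * l) * (1 + α + (a + m) * l) + (1 - α) + (a - m) * l = 0) ∧
    (∀ f : ℝ → ℂ, ContDiff ℝ 2 f →
        (∀ x ∈ Ioo (0:ℝ) 1, deriv (deriv f) x = l ^ 2 * f x) →
        f 0 = 0 →
        (1 + a * l) * deriv f 1 + l * (α + m * l) * f 1 = 0 →
        ∃ c : ℂ, ∀ x ∈ Icc (0:ℝ) 1,
          f x = c * (Complex.exp (l * x) - Complex.exp (-(l * x)))) :=
  stmt4_general m a α l
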